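/- arXiv:2211.10172 — 2 statements merged into one kernel-verified Lean document; each statement's English description precedes it below -/
import Mathlib

section
/- Let λ be the cylindrical Lévy measure of the canonical α-stable cylindrical Lévy process on a separable Hilbert space G, and let Φ : G → H be a Hilbert–Schmidt operator between separable Hilbert spaces. Then (1/c_α) ‖Φ‖_HS^α ≤ (λ ∘ Φ⁻¹)(B̄_H^c), where B̄_H^c = {h ∈ H : ‖h‖ > 1} and c_α > 0 is a constant depending only on α ∈ (0,2). -/
open MeasureTheory RealInnerProductSpace

noncomputable section

namespace Stmt3Aux
open Finset


variable {ι : Type*} [DecidableEq ι] {E : Type*} [NormedAddCommGroup E] [InnerProductSpace ℝ E]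

/-- sign function attached to a subset -/
def sgn (A : Finset ι) (j : ι) : ℝ := if j ∈ A then 1 else -1

lemma sgn_sum_insert_old {k : ι} {F A : Finset ι} (hk : k ∉ F) (hA : A ⊆ F) (v : ι → E) :
    ∑ j ∈ insert k F, sgn A j • v j = (∑ j ∈ F, sgn A j • v j) - v k := by
  rw [Finset.sum_insert hk]
  have : sgn A k = -1 := if_neg (fun h => hk (hA h))
  rw [this, neg_one_smul]
  abel

lemma sgn_sum_insert_new {k : ι} {F A : Finset ι} (hk : k ∉ F) (v : ι → E) :
    ∑ j ∈ insert k F, sgn (insert k A) j • v j = (∑ j ∈ F, sgn A j • v j) + v k := by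
  rw [Finset.sum_insert hk]
  have h1 : sgn (insert k A) k = 1 := if_pos (Finset.mem_insert_self k A)
  rw [h1, one_smul]
  rw [Finset.sum_congr rfl (fun j hj => ?_)]
  · abel
  · have : sgn (insert k A) j = sgn A j := by
      unfold sgn
      have : j ≠ k := fun h => hk (h ▸ hj)
      simp [Finset.mem_insert, this]
    rw [this]

/-- L1 : sum of squared norms of signed sums -/
lemma sum_sq_signed (F : Finset ι) (v : ι → E) :
    ∑ A ∈ F.powerset, ‖∑ j ∈ F, sgn A j • v j‖ ^ 2
      = 2 ^ F.card * ∑ j ∈ F, ‖v j‖ ^ 2 := by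
  classical
  induction F using Finset.induction_on with
  | empty => simp
  | @insert k F hk ih =>
    rw [Finset.sum_powerset_insert hk]
    have e1 : ∀ A ∈ F.powerset, ‖∑ j ∈ insert k F, sgn A j • v j‖ ^ 2
        = ‖(∑ j ∈ F, sgn A j • v j) - v k‖ ^ 2 := fun A hA => by
      rw [sgn_sum_insert_old hk (Finset.mem_powerset.mp hA) v]
    have e2 : ∀ A ∈ F.powerset, ‖∑ j ∈ insert k F, sgn (insert k A) j • v j‖ ^ 2
        = ‖(∑ j ∈ F, sgn A j • v j) + v k‖ ^ 2 := fun A hA => by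
      rw [sgn_sum_insert_new hk v]
    rw [Finset.sum_congr rfl e1, Finset.sum_congr rfl e2]
    have par : ∀ A ∈ F.powerset,
        ‖(∑ j ∈ F, sgn A j • v j) - v k‖ ^ 2 + ‖(∑ j ∈ F, sgn A j • v j) + v k‖ ^ 2
        = 2 * (‖∑ j ∈ F, sgn A j • v j‖ ^ 2 + ‖v k‖ ^ 2) := fun A _ => by
      rw [norm_sub_sq_real, norm_add_sq_real]; ring
    rw [← Finset.sum_add_distrib, Finset.sum_congr rfl par]
    rw [Finset.sum_insert hk, Finset.card_insert_of_notMem hk]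
    have expand : ∑ A ∈ F.powerset, 2 * (‖∑ j ∈ F, sgn A j • v j‖ ^ 2 + ‖v k‖ ^ 2)
        = 2 * (∑ A ∈ F.powerset, ‖∑ j ∈ F, sgn A j • v j‖ ^ 2) + 2 ^ F.card * (2 * ‖v k‖ ^ 2) := by
      rw [Finset.sum_congr rfl (fun A _ => mul_add 2 _ _), Finset.sum_add_distrib,
        Finset.sum_const, Finset.card_powerset, ← Finset.mul_sum]
      push_cast
      ring
    rw [expand, ih, pow_succ]
    ring


/-- L2 : fourth moment bound -/
lemma sum_pow4_signed (F : Finset ι) (v : ι → E) :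
    ∑ A ∈ F.powerset, ‖∑ j ∈ F, sgn A j • v j‖ ^ 4
      ≤ 3 * 2 ^ F.card * (∑ j ∈ F, ‖v j‖ ^ 2) ^ 2 := by
  classical
  induction F using Finset.induction_on with
  | empty => simp
  | @insert k F hk ih =>
    rw [Finset.sum_powerset_insert hk]
    set w := v k with hw
    set σ2 := ∑ j ∈ F, ‖v j‖ ^ 2 with hσ2
    have hσ2nn : 0 ≤ σ2 := Finset.sum_nonneg fun j _ => by positivity
    have key : ∀ A ∈ F.powerset,
        ‖∑ j ∈ insert k F, sgn A j • v j‖ ^ 4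
          + ‖∑ j ∈ insert k F, sgn (insert k A) j • v j‖ ^ 4
        ≤ 2 * (‖∑ j ∈ F, sgn A j • v j‖ ^ 2 + ‖w‖ ^ 2) ^ 2
            + 8 * (‖∑ j ∈ F, sgn A j • v j‖ ^ 2 * ‖w‖ ^ 2) := by
      intro A hA
      rw [sgn_sum_insert_old hk (Finset.mem_powerset.mp hA) v, sgn_sum_insert_new hk v]
      set S := ∑ j ∈ F, sgn A j • v j
      have h1 : ‖S - w‖ ^ 2 = ‖S‖ ^ 2 - 2 * ⟪S, w⟫ + ‖w‖ ^ 2 := norm_sub_sq_real S w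
      have h2 : ‖S + w‖ ^ 2 = ‖S‖ ^ 2 + 2 * ⟪S, w⟫ + ‖w‖ ^ 2 := norm_add_sq_real S w
      have h4a : ‖S - w‖ ^ 4 = (‖S - w‖ ^ 2) ^ 2 := by ring
      have h4b : ‖S + w‖ ^ 4 = (‖S + w‖ ^ 2) ^ 2 := by ring
      rw [h4a, h4b, h1, h2]
      have hq : ⟪S, w⟫ ^ 2 ≤ ‖S‖ ^ 2 * ‖w‖ ^ 2 := by
        have := abs_real_inner_le_norm S w
        nlinarith [abs_nonneg ⟪S, w⟫, sq_abs ⟪S, w⟫]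
      nlinarith [hq]
    calc ∑ A ∈ F.powerset, ‖∑ j ∈ insert k F, sgn A j • v j‖ ^ 4
          + ∑ A ∈ F.powerset, ‖∑ j ∈ insert k F, sgn (insert k A) j • v j‖ ^ 4
        = ∑ A ∈ F.powerset, (‖∑ j ∈ insert k F, sgn A j • v j‖ ^ 4
            + ‖∑ j ∈ insert k F, sgn (insert k A) j • v j‖ ^ 4) := by
          rw [Finset.sum_add_distrib]
      _ ≤ ∑ A ∈ F.powerset, (2 * (‖∑ j ∈ F, sgn A j • v j‖ ^ 2 + ‖w‖ ^ 2) ^ 2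
            + 8 * (‖∑ j ∈ F, sgn A j • v j‖ ^ 2 * ‖w‖ ^ 2)) := Finset.sum_le_sum key
      _ = 2 * ∑ A ∈ F.powerset, ‖∑ j ∈ F, sgn A j • v j‖ ^ 4
            + (4 + 8) * ‖w‖ ^ 2 * ∑ A ∈ F.powerset, ‖∑ j ∈ F, sgn A j • v j‖ ^ 2
            + 2 * 2 ^ F.card * ‖w‖ ^ 4 := by
          rw [Finset.sum_congr rfl (fun A _ => by ring :
            ∀ A ∈ F.powerset, (2 * (‖∑ j ∈ F, sgn A j • v j‖ ^ 2 + ‖w‖ ^ 2) ^ 2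
              + 8 * (‖∑ j ∈ F, sgn A j • v j‖ ^ 2 * ‖w‖ ^ 2))
            = 2 * ‖∑ j ∈ F, sgn A j • v j‖ ^ 4
              + (4 + 8) * ‖w‖ ^ 2 * ‖∑ j ∈ F, sgn A j • v j‖ ^ 2
              + 2 * ‖w‖ ^ 4)]
          rw [Finset.sum_add_distrib, Finset.sum_add_distrib, ← Finset.mul_sum, ← Finset.mul_sum,
            Finset.sum_const, Finset.card_powerset, nsmul_eq_mul]
          push_cast
          ring
      _ ≤ 2 * (3 * 2 ^ F.card * σ2 ^ 2)
            + (4 + 8) * ‖w‖ ^ 2 * (2 ^ F.card * σ2)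
            + 2 * 2 ^ F.card * ‖w‖ ^ 4 := by
          have hL1 := sum_sq_signed F v
          rw [hL1]
          have h8 : (0:ℝ) ≤ ‖w‖ ^ 2 := by positivity
          nlinarith [ih]
      _ ≤ 3 * 2 ^ (insert k F).card * (∑ j ∈ insert k F, ‖v j‖ ^ 2) ^ 2 := by
          rw [Finset.card_insert_of_notMem hk, Finset.sum_insert hk, pow_succ]
          have hwv : ‖v k‖ = ‖w‖ := rfl
          rw [hwv, ← hσ2]
          have h8 : (0:ℝ) ≤ ‖w‖ ^ 2 := by positivity
          have h9 : (0:ℝ) < 2 ^ F.card := by positivity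
          have hpow : (2:ℝ) ^ (F.card + 1) = 2 ^ F.card * 2 := pow_succ 2 F.card
          rw [hpow]
          nlinarith [h9, hσ2nn, h8, mul_nonneg h9.le (by positivity : (0:ℝ) ≤ ‖w‖ ^ 4),
            mul_nonneg h9.le (mul_nonneg h8 hσ2nn)]

/-- L3 : expectation of cosine of signed sums -/
lemma sum_cos_signed (F : Finset ι) (x : ι → ℝ) :
    ∑ A ∈ F.powerset, Real.cos (∑ j ∈ F, sgn A j • x j)
      = 2 ^ F.card * ∏ j ∈ F, Real.cos (x j) := by
  classical
  induction F using Finset.induction_on with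
  | empty => simp
  | @insert k F hk ih =>
    rw [Finset.sum_powerset_insert hk]
    have e1 : ∀ A ∈ F.powerset, Real.cos (∑ j ∈ insert k F, sgn A j • x j)
        = Real.cos ((∑ j ∈ F, sgn A j • x j) - x k) := fun A hA => by
      rw [sgn_sum_insert_old hk (Finset.mem_powerset.mp hA) x]
    have e2 : ∀ A ∈ F.powerset, Real.cos (∑ j ∈ insert k F, sgn (insert k A) j • x j)
        = Real.cos ((∑ j ∈ F, sgn A j • x j) + x k) := fun A hA => by
      rw [sgn_sum_insert_new hk x]
    rw [Finset.sum_congr rfl e1, Finset.sum_congr rfl e2, ← Finset.sum_add_distrib]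
    have e3 : ∀ A ∈ F.powerset,
        Real.cos ((∑ j ∈ F, sgn A j • x j) - x k)
          + Real.cos ((∑ j ∈ F, sgn A j • x j) + x k)
        = 2 * Real.cos (x k) * Real.cos (∑ j ∈ F, sgn A j • x j) := fun A _ => by
      rw [Real.cos_sub, Real.cos_add]; ring
    rw [Finset.sum_congr rfl e3, ← Finset.mul_sum, ih,
      Finset.card_insert_of_notMem hk, Finset.prod_insert hk, pow_succ]
    ring


/-- arith mean version of L1, packaged -/
lemma mean_helper (F : Finset ι) (v : ι → E) {q : ℝ} (hq : 1 ≤ q) (f : Finset ι → ℝ)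
    (hf : ∀ A ∈ F.powerset, 0 ≤ f A) :
    ∑ A ∈ F.powerset, f A
      ≤ 2 ^ F.card * ((2 ^ F.card : ℝ)⁻¹ * ∑ A ∈ F.powerset, f A ^ q) ^ (1/q) := by
  have hW : (0:ℝ) < 2 ^ F.card := by positivity
  have hw' : ∑ _A ∈ F.powerset, ((2:ℝ) ^ F.card)⁻¹ = 1 := by
    rw [Finset.sum_const, Finset.card_powerset, nsmul_eq_mul]
    push_cast
    field_simp
  have key := Real.arith_mean_le_rpow_mean F.powerset (fun _ => ((2:ℝ) ^ F.card)⁻¹) f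
    (fun A _ => by positivity) hw' hf hq
  simp only [← Finset.mul_sum] at key
  calc ∑ A ∈ F.powerset, f A
      = 2 ^ F.card * (((2:ℝ) ^ F.card)⁻¹ * ∑ A ∈ F.powerset, f A) := by
        field_simp
    _ ≤ 2 ^ F.card * ((((2:ℝ) ^ F.card)⁻¹ * ∑ A ∈ F.powerset, f A ^ q) ^ (1/q)) :=
        mul_le_mul_of_nonneg_left key hW.le

/-- L4 : Jensen upper bound -/
lemma sum_rpow_le (F : Finset ι) (v : ι → E) {α : ℝ} (hα : 0 < α) (hα2 : α < 2) :
    ∑ A ∈ F.powerset, ‖∑ j ∈ F, sgn A j • v j‖ ^ α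
      ≤ 2 ^ F.card * (∑ j ∈ F, ‖v j‖ ^ 2) ^ (α/2) := by
  classical
  have hW : (0:ℝ) < 2 ^ F.card := by positivity
  have hq : (1:ℝ) ≤ 2/α := by
    rw [le_div_iff₀ hα]; linarith
  have h := mean_helper F v hq (fun A => ‖∑ j ∈ F, sgn A j • v j‖ ^ α)
    (fun A _ => Real.rpow_nonneg (norm_nonneg _) α)
  have hz : ∀ A ∈ F.powerset, (‖∑ j ∈ F, sgn A j • v j‖ ^ α) ^ (2/α)
      = ‖∑ j ∈ F, sgn A j • v j‖ ^ (2:ℕ) := by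
    intro A _
    rw [← Real.rpow_natCast _ 2, ← Real.rpow_mul (norm_nonneg _)]
    congr 1
    field_simp
    norm_num
  rw [Finset.sum_congr rfl hz, sum_sq_signed F v] at h
  have : ((2:ℝ) ^ F.card)⁻¹ * (2 ^ F.card * ∑ j ∈ F, ‖v j‖ ^ 2) = ∑ j ∈ F, ‖v j‖ ^ 2 := by
    field_simp
  rw [this] at h
  have h12 : 1/(2/α) = α/2 := by
    field_simp
  rw [h12] at h
  exact h


/-- L5 : anti-concentration lower bound (Paley–Zygmund via Hölder) -/
lemma sum_rpow_ge (F : Finset ι) (v : ι → E) {α : ℝ} (hα : 0 < α) (hα2 : α < 2) :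
    2 ^ F.card * (∑ j ∈ F, ‖v j‖ ^ 2) ^ (α/2) / 3
      ≤ ∑ A ∈ F.powerset, ‖∑ j ∈ F, sgn A j • v j‖ ^ α := by
  classical
  set W : ℝ := 2 ^ F.card with hWdef
  have hW : (0:ℝ) < W := by positivity
  set σ2 := ∑ j ∈ F, ‖v j‖ ^ 2 with hσ2def
  have hσnn : 0 ≤ σ2 := Finset.sum_nonneg fun j _ => by positivity
  have hRHSnn : 0 ≤ ∑ A ∈ F.powerset, ‖∑ j ∈ F, sgn A j • v j‖ ^ α :=
    Finset.sum_nonneg fun A _ => Real.rpow_nonneg (norm_nonneg _) α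
  rcases eq_or_lt_of_le hσnn with hσ0 | hσpos
  · rw [← hσ0, Real.zero_rpow (by positivity : α/2 ≠ 0)]
    simpa using hRHSnn
  -- abbreviations
  set p : Finset ι → ℝ := fun A => ‖∑ j ∈ F, sgn A j • v j‖ with hpdef
  have hpnn : ∀ A, 0 ≤ p A := fun A => norm_nonneg _
  -- Cauchy–Schwarz
  have hCS : (∑ A ∈ F.powerset, p A ^ (2:ℕ)) ^ 2
      ≤ (∑ A ∈ F.powerset, p A ^ α) * ∑ A ∈ F.powerset, p A ^ (4 - α) := by
    have h := Finset.sum_mul_sq_le_sq_mul_sq F.powerset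
      (fun A => p A ^ (α/2)) (fun A => p A ^ (2 - α/2))
    have e1 : ∀ A ∈ F.powerset, p A ^ (α/2) * p A ^ (2 - α/2) = p A ^ (2:ℕ) := by
      intro A _
      rw [← Real.rpow_add' (hpnn A) (by norm_num : α/2 + (2 - α/2) ≠ 0)]
      rw [show α/2 + (2 - α/2) = (2:ℝ) by ring, Real.rpow_two]
    have e2 : ∀ A ∈ F.powerset, (p A ^ (α/2)) ^ 2 = p A ^ α := by
      intro A _
      rw [← Real.rpow_natCast (p A ^ (α/2)) 2, ← Real.rpow_mul (hpnn A)]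
      norm_num
    have e3 : ∀ A ∈ F.powerset, (p A ^ (2 - α/2)) ^ 2 = p A ^ (4 - α) := by
      intro A _
      rw [← Real.rpow_natCast (p A ^ (2 - α/2)) 2, ← Real.rpow_mul (hpnn A)]
      ring_nf
    rw [Finset.sum_congr rfl e1, Finset.sum_congr rfl e2, Finset.sum_congr rfl e3] at h
    exact h
  -- L1
  have hL1 : ∑ A ∈ F.powerset, p A ^ (2:ℕ) = W * σ2 := sum_sq_signed F v
  -- Jensen for exponent 4 - α
  have hJ : ∑ A ∈ F.powerset, p A ^ (4 - α)
      ≤ W * (3 * σ2 ^ (2 - α/2)) := by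
    have hq : (1:ℝ) ≤ 4 / (4 - α) := by
      rw [le_div_iff₀ (by linarith)]; linarith
    have h := mean_helper F v hq (fun A => p A ^ (4 - α))
      (fun A _ => Real.rpow_nonneg (hpnn A) _)
    have hz : ∀ A ∈ F.powerset, (p A ^ (4 - α)) ^ (4/(4 - α)) = p A ^ (4:ℕ) := by
      intro A _
      rw [← Real.rpow_natCast (p A) 4, ← Real.rpow_mul (hpnn A)]
      congr 1
      have h4 : (4:ℝ) - α ≠ 0 := by linarith
      push_cast
      field_simp
    rw [Finset.sum_congr rfl hz] at h
    have hL2 : ∑ A ∈ F.powerset, p A ^ (4:ℕ) ≤ 3 * W * σ2 ^ 2 := sum_pow4_signed F v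
    have hmean : (W⁻¹ * ∑ A ∈ F.powerset, p A ^ (4:ℕ)) ≤ 3 * σ2 ^ 2 := by
      rw [inv_mul_le_iff₀ hW]
      calc ∑ A ∈ F.powerset, p A ^ (4:ℕ) ≤ 3 * W * σ2 ^ 2 := hL2
        _ = W * (3 * σ2 ^ 2) := by ring
    have hmono : (W⁻¹ * ∑ A ∈ F.powerset, p A ^ (4:ℕ)) ^ (1/(4/(4-α)))
        ≤ (3 * σ2 ^ 2) ^ (1/(4/(4-α))) := by
      apply Real.rpow_le_rpow _ hmean (by positivity)
      have : 0 ≤ ∑ A ∈ F.powerset, p A ^ (4:ℕ) := Finset.sum_nonneg fun A _ => by positivity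
      positivity
    have hfinal : (3 * σ2 ^ 2) ^ (1/(4/(4-α))) ≤ 3 * σ2 ^ (2 - α/2) := by
      have hexp : 1/(4/(4-α)) = (4-α)/4 := by field_simp
      rw [hexp, Real.mul_rpow (by norm_num) (by positivity)]
      have h3 : (3:ℝ) ^ ((4-α)/4) ≤ 3 := by
        calc (3:ℝ) ^ ((4-α)/4) ≤ 3 ^ (1:ℝ) :=
          Real.rpow_le_rpow_of_exponent_le (by norm_num) (by linarith [div_le_one_of_le₀ (by linarith : 4 - α ≤ 4) (by norm_num : (0:ℝ) ≤ 4)])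
          _ = 3 := Real.rpow_one 3
      have hσ : (σ2 ^ 2) ^ ((4-α)/4) = σ2 ^ (2 - α/2) := by
        rw [← Real.rpow_natCast σ2 2, ← Real.rpow_mul hσnn]
        congr 1
        ring
      rw [hσ]
      apply mul_le_mul_of_nonneg_right h3 (Real.rpow_nonneg hσnn _)
    calc ∑ A ∈ F.powerset, p A ^ (4 - α)
        ≤ W * ((W⁻¹ * ∑ A ∈ F.powerset, p A ^ (4:ℕ)) ^ (1/(4/(4-α)))) := h
      _ ≤ W * (3 * σ2 ^ (2 - α/2)) :=
          mul_le_mul_of_nonneg_left (le_trans hmono hfinal) hW.le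
  -- combine
  have hchain : (W * σ2) ^ 2 ≤ (∑ A ∈ F.powerset, p A ^ α) * (W * (3 * σ2 ^ (2 - α/2))) := by
    rw [← hL1]
    calc (∑ A ∈ F.powerset, p A ^ (2:ℕ)) ^ 2
        ≤ (∑ A ∈ F.powerset, p A ^ α) * ∑ A ∈ F.powerset, p A ^ (4 - α) := hCS
      _ ≤ (∑ A ∈ F.powerset, p A ^ α) * (W * (3 * σ2 ^ (2 - α/2))) :=
          mul_le_mul_of_nonneg_left hJ hRHSnn
  have hid : (W * σ2) ^ 2 = (W * σ2 ^ (α/2) / 3) * (W * (3 * σ2 ^ (2 - α/2))) := by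
    have h2 : σ2 ^ (α/2) * σ2 ^ (2 - α/2) = σ2 ^ (2:ℕ) := by
      rw [← Real.rpow_add hσpos]
      rw [show α/2 + (2 - α/2) = (2:ℝ) by ring, Real.rpow_two]
    calc (W * σ2) ^ 2 = W ^ 2 * σ2 ^ (2:ℕ) := by ring
      _ = W ^ 2 * (σ2 ^ (α/2) * σ2 ^ (2 - α/2)) := by rw [h2]
      _ = (W * σ2 ^ (α/2) / 3) * (W * (3 * σ2 ^ (2 - α/2))) := by ring
  have hD : 0 < W * (3 * σ2 ^ (2 - α/2)) := by
    have := Real.rpow_pos_of_pos hσpos (2 - α/2)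
    positivity
  have := hid ▸ hchain
  exact le_of_mul_le_mul_right this hD


/-- quadratic upper bound for cosine near 0 -/
lemma cos_le_one_sub_sq_div_five {x : ℝ} (hx : |x| ≤ 1) : Real.cos x ≤ 1 - x ^ 2 / 5 := by
  have hpi : |x| ≤ Real.pi := le_trans hx (by linarith [Real.pi_gt_three])
  have h := Real.cos_le_one_sub_mul_cos_sq hpi
  have hpi2 : Real.pi ^ 2 < 10 := by nlinarith [Real.pi_lt_d2, Real.pi_gt_three]
  have h5 : (1:ℝ)/5 ≤ 2 / Real.pi ^ 2 := by
    rw [div_le_div_iff₀ (by norm_num) (by positivity)]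
    nlinarith
  nlinarith [sq_nonneg x]

/-- product of cosines: lower bound on 1 - prod, for small vectors -/
lemma one_sub_prod_cos_ge (F : Finset ι) (x : ι → ℝ) (hx : ∀ j ∈ F, |x j| ≤ 1)
    (hsum : ∑ j ∈ F, x j ^ 2 ≤ 1) :
    (∑ j ∈ F, x j ^ 2) / 10 ≤ 1 - ∏ j ∈ F, Real.cos (x j) := by
  set y := (∑ j ∈ F, x j ^ 2) / 5 with hy
  have hynn : 0 ≤ y := by
    have : 0 ≤ ∑ j ∈ F, x j ^ 2 := Finset.sum_nonneg fun j _ => sq_nonneg _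
    positivity
  have hy1 : y ≤ 1 := by
    rw [hy]; linarith
  have step1 : ∏ j ∈ F, Real.cos (x j) ≤ ∏ j ∈ F, (1 - x j ^ 2 / 5) := by
    apply Finset.prod_le_prod
    · intro j hj
      apply Real.cos_nonneg_of_mem_Icc
      constructor
      · have := abs_le.mp (hx j hj)
        have h2 : -(Real.pi/2) ≤ -1 := by linarith [Real.pi_gt_three]
        linarith [this.1]
      · have := abs_le.mp (hx j hj)
        linarith [this.2, Real.pi_gt_three]
    · intro j hj
      exact cos_le_one_sub_sq_div_five (hx j hj)
  have step2 : ∏ j ∈ F, (1 - x j ^ 2 / 5) ≤ Real.exp (-y) := by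
    calc ∏ j ∈ F, (1 - x j ^ 2 / 5) ≤ ∏ j ∈ F, Real.exp (-(x j ^ 2 / 5)) := by
          apply Finset.prod_le_prod
          · intro j hj
            have h1 : x j ^ 2 ≤ 1 := by
              have := abs_le.mp (hx j hj)
              nlinarith [sq_abs (x j), abs_nonneg (x j)]
            linarith
          · intro j hj
            linarith [Real.add_one_le_exp (-(x j ^ 2 / 5))]
      _ = Real.exp (∑ j ∈ F, -(x j ^ 2 / 5)) := (Real.exp_sum F _).symm
      _ = Real.exp (-y) := by
          congr 1
          rw [hy, Finset.sum_neg_distrib, Finset.sum_div]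
  have step3 : Real.exp (-y) ≤ 1 - y/2 := by
    have h1 : (0:ℝ) < 1 + y := by linarith
    have h2 : Real.exp (-y) ≤ (1 + y)⁻¹ := by
      rw [Real.exp_neg]
      apply inv_anti₀ h1
      linarith [Real.add_one_le_exp y]
    have h3 : (1 + y)⁻¹ ≤ 1 - y/2 := by
      rw [inv_le_iff_one_le_mul₀ h1]
      nlinarith
    linarith
  have h : ∏ j ∈ F, Real.cos (x j) ≤ 1 - y/2 := le_trans step1 (le_trans step2 step3)
  rw [hy] at h
  linarith

/-- 1 - prod ≤ sum of (1 - terms), all terms in [-1,1] -/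
lemma one_sub_prod_le_sum (F : Finset ι) (a : ι → ℝ) (ha : ∀ j ∈ F, |a j| ≤ 1) :
    1 - ∏ j ∈ F, a j ≤ ∑ j ∈ F, (1 - a j) := by
  classical
  induction F using Finset.induction_on with
  | empty => simp
  | @insert k F hk ih =>
    have hk1 : |a k| ≤ 1 := ha k (Finset.mem_insert_self k F)
    have ha' : ∀ j ∈ F, |a j| ≤ 1 := fun j hj => ha j (Finset.mem_insert_of_mem hj)
    have hP : |∏ j ∈ F, a j| ≤ 1 := by
      rw [Finset.abs_prod]
      apply Finset.prod_le_one (fun j _ => abs_nonneg _) (fun j hj => ha' j hj)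
    rw [Finset.prod_insert hk, Finset.sum_insert hk]
    have ihF := ih ha'
    have h1 : 1 - a k * ∏ j ∈ F, a j = (1 - a k) + a k * (1 - ∏ j ∈ F, a j) := by ring
    have h2 : a k * (1 - ∏ j ∈ F, a j) ≤ 1 - ∏ j ∈ F, a j := by
      have hnn : 0 ≤ 1 - ∏ j ∈ F, a j := by linarith [(abs_le.mp hP).2]
      nlinarith [(abs_le.mp hk1).2]
    linarith

/-- upper quadratic bound -/
lemma one_sub_prod_cos_le (F : Finset ι) (x : ι → ℝ) :
    1 - ∏ j ∈ F, Real.cos (x j) ≤ (∑ j ∈ F, x j ^ 2) / 2 := by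
  have h := one_sub_prod_le_sum F (fun j => Real.cos (x j))
    (fun j _ => Real.abs_cos_le_one (x j))
  calc 1 - ∏ j ∈ F, Real.cos (x j) ≤ ∑ j ∈ F, (1 - Real.cos (x j)) := h
    _ ≤ ∑ j ∈ F, x j ^ 2 / 2 := Finset.sum_le_sum fun j _ => by
        linarith [Real.one_sub_sq_div_two_le_cos (x := x j)]
    _ = (∑ j ∈ F, x j ^ 2) / 2 := by rw [Finset.sum_div]

/-- trivial bound -/
lemma one_sub_prod_cos_le_two (F : Finset ι) (x : ι → ℝ) :
    1 - ∏ j ∈ F, Real.cos (x j) ≤ 2 := by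
  have hP : |∏ j ∈ F, Real.cos (x j)| ≤ 1 := by
    rw [Finset.abs_prod]
    apply Finset.prod_le_one (fun j _ => abs_nonneg _) (fun j _ => Real.abs_cos_le_one (x j))
  linarith [(abs_le.mp hP).1]

/-- nonneg -/
lemma one_sub_prod_cos_nonneg (F : Finset ι) (x : ι → ℝ) :
    0 ≤ 1 - ∏ j ∈ F, Real.cos (x j) := by
  have hP : |∏ j ∈ F, Real.cos (x j)| ≤ 1 := by
    rw [Finset.abs_prod]
    apply Finset.prod_le_one (fun j _ => abs_nonneg _) (fun j _ => Real.abs_cos_le_one (x j))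
  linarith [(abs_le.mp hP).2]

end Stmt3Aux

open Stmt3Aux

set_option maxHeartbeats 2000000

/-- Let `λ` be the cylindrical Lévy measure of the canonical `α`-stable
cylindrical Lévy process on a separable Hilbert space `G` and `Φ : G → H` a Hilbert–Schmidt
operator.  Then `(1/c_α) ‖Φ‖_HS^α ≤ (λ ∘ Φ⁻¹)({h : ‖h‖ > 1})` for a constant `c_α > 0`
depending only on `α`.  The extension of `λ ∘ Φ⁻¹` to a genuine Lévy measure `μ` on `H` is
characterised as the symmetric Lévy measure with characteristic exponent
`u ↦ ‖Φ* u‖^α` (the Lévy measure of the Radonified increment `Φ L(1)`, whose characteristic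
function is `exp(-‖Φ* u‖^α)`). -/
theorem stmt3 (α : ℝ) (hα : 0 < α) (hα2 : α < 2) :
    ∃ c : ℝ, 0 < c ∧
      ∀ (G H : Type)
        [NormedAddCommGroup G] [InnerProductSpace ℝ G] [CompleteSpace G]
        [NormedAddCommGroup H] [InnerProductSpace ℝ H] [CompleteSpace H]
        [MeasurableSpace H] [BorelSpace H] [SecondCountableTopology H]
        (bG : HilbertBasis ℕ ℝ G)
        (Φ : G →L[ℝ] H)
        -- `Φ` is a Hilbert–Schmidt operator:
        (hHS : Summable fun i => ‖Φ (bG i)‖ ^ 2)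
        (μ : Measure H) (hσ : SigmaFinite μ)
        -- `μ` is the genuine Lévy measure on `H` extending `λ ∘ Φ⁻¹`:
        (hsym : μ.map (fun h => -h) = μ) (h0 : μ {0} = 0)
        (hchar : ∀ u : H,
          ∫⁻ h, ENNReal.ofReal (1 - Real.cos ⟪u, h⟫) ∂μ
            = ENNReal.ofReal (‖(ContinuousLinearMap.adjoint Φ) u‖ ^ α)),
        ENNReal.ofReal (c⁻¹ * (∑' i, ‖Φ (bG i)‖ ^ 2) ^ (α / 2))
          ≤ μ {h : H | 1 < ‖h‖} := by

  classical
  set t : ℝ := (1/30 : ℝ) ^ ((2 - α)⁻¹) with htdef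
  have ht : 0 < t := Real.rpow_pos_of_pos (by norm_num) _
  have htα : 0 < t ^ α := Real.rpow_pos_of_pos ht α
  have h2α : (2:ℝ) - α ≠ 0 := by linarith
  have ht2 : t ^ (2:ℝ) = t ^ α * (1/30) := by
    have hta : t ^ ((2:ℝ) - α) = 1/30 := by
      rw [htdef, ← Real.rpow_mul (by norm_num : (0:ℝ) ≤ 1/30),
        inv_mul_cancel₀ h2α, Real.rpow_one]
    calc t ^ (2:ℝ) = t ^ (α + (2 - α)) := by ring_nf
      _ = t ^ α * t ^ ((2:ℝ) - α) := Real.rpow_add ht α (2 - α)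
      _ = t ^ α * (1/30) := by rw [hta]
  refine ⟨12 * (t ^ α)⁻¹, by positivity, ?_⟩
  intro G H _ _ _ _ _ _ _ _ _ bG Φ hHS μ hσ hsym h0 hchar
  by_cases hT : μ {h : H | 1 < ‖h‖} = ⊤
  · rw [hT]; exact le_top
  obtain ⟨s, b, hb⟩ := exists_hilbertBasis ℝ H
  set v : s → G := fun j => (ContinuousLinearMap.adjoint Φ) (b j) with hv
  -- Parseval
  have hPar1 : ∀ y : G, HasSum (fun i : ℕ => ⟪y, bG i⟫ ^ 2) (‖y‖ ^ 2) := by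
    intro y
    have h := bG.hasSum_inner_mul_inner y y
    rw [real_inner_self_eq_norm_sq] at h
    have e : (fun i : ℕ => ⟪y, bG i⟫ * ⟪bG i, y⟫) = fun i => ⟪y, bG i⟫ ^ 2 := by
      funext i; rw [sq, real_inner_comm]
    rwa [e] at h
  have hPar2 : ∀ u : H, HasSum (fun j : s => ⟪u, b j⟫ ^ 2) (‖u‖ ^ 2) := by
    intro u
    have h := b.hasSum_inner_mul_inner u u
    rw [real_inner_self_eq_norm_sq] at h
    have e : (fun j : s => ⟪u, b j⟫ * ⟪b j, u⟫) = fun j => ⟪u, b j⟫ ^ 2 := by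
      funext j; rw [sq, real_inner_comm]
    rwa [e] at h
  have hkey_sum : ∑' (j : s), ENNReal.ofReal (‖v j‖ ^ 2)
      = ENNReal.ofReal (∑' i, ‖Φ (bG i)‖ ^ 2) := by
    have e1 : ∀ j : s, ENNReal.ofReal (‖v j‖ ^ 2)
        = ∑' i : ℕ, ENNReal.ofReal (⟪v j, bG i⟫ ^ 2) := by
      intro j
      have h := hPar1 (v j)
      rw [← h.tsum_eq]
      exact ENNReal.ofReal_tsum_of_nonneg (fun i => sq_nonneg _) h.summable
    have e2 : ∀ i : ℕ, ENNReal.ofReal (‖Φ (bG i)‖ ^ 2)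
        = ∑' j : s, ENNReal.ofReal (⟪v j, bG i⟫ ^ 2) := by
      intro i
      have h := hPar2 (Φ (bG i))
      have hh : ∀ j : s, ⟪Φ (bG i), b j⟫ ^ 2 = ⟪v j, bG i⟫ ^ 2 := by
        intro j
        rw [hv]
        simp only
        rw [ContinuousLinearMap.adjoint_inner_left, real_inner_comm]
      rw [← h.tsum_eq, ENNReal.ofReal_tsum_of_nonneg (fun j => sq_nonneg _) h.summable]
      exact tsum_congr fun j => by rw [hh j]
    calc ∑' (j : s), ENNReal.ofReal (‖v j‖ ^ 2)
        = ∑' (j : s) (i : ℕ), ENNReal.ofReal (⟪v j, bG i⟫ ^ 2) := tsum_congr e1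
      _ = ∑' (i : ℕ) (j : s), ENNReal.ofReal (⟪v j, bG i⟫ ^ 2) := ENNReal.tsum_comm
      _ = ∑' i : ℕ, ENNReal.ofReal (‖Φ (bG i)‖ ^ 2) := tsum_congr fun i => (e2 i).symm
      _ = ENNReal.ofReal (∑' i, ‖Φ (bG i)‖ ^ 2) :=
          (ENNReal.ofReal_tsum_of_nonneg (fun i => by positivity) hHS).symm
  have hsumma : Summable (fun j : s => ‖v j‖ ^ 2) := by
    have hne : ∑' (j : s), ENNReal.ofReal (‖v j‖ ^ 2) ≠ ⊤ := by
      rw [hkey_sum]; exact ENNReal.ofReal_ne_top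
    have h := ENNReal.summable_toReal hne
    convert h using 2 with j
    rw [ENNReal.toReal_ofReal (by positivity)]
  have hSa : ∑' j : s, ‖v j‖ ^ 2 = ∑' i, ‖Φ (bG i)‖ ^ 2 := by
    have h1 : ENNReal.ofReal (∑' j : s, ‖v j‖ ^ 2)
        = ENNReal.ofReal (∑' i, ‖Φ (bG i)‖ ^ 2) := by
      rw [ENNReal.ofReal_tsum_of_nonneg (fun j => by positivity) hsumma, hkey_sum]
    exact (ENNReal.ofReal_eq_ofReal_iff (tsum_nonneg fun j => by positivity)
      (tsum_nonneg fun i => by positivity)).mp h1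
  -- measurability helpers
  have hBmeas : MeasurableSet {h : H | ‖h‖ ≤ 1} :=
    (isClosed_le continuous_norm continuous_const).measurableSet
  have hcompl : {h : H | ‖h‖ ≤ 1}ᶜ = {h : H | 1 < ‖h‖} := by
    ext h; simp [not_le]
  -- the key per-finset estimate
  have key : ∀ F : Finset s,
      t ^ α * ((∑ j ∈ F, ‖v j‖ ^ 2) ^ (α/2)) / 12 ≤ (μ {h : H | 1 < ‖h‖}).toReal := by
    intro F
    set W : ℝ := 2 ^ F.card with hW
    have hWpos : (0:ℝ) < W := by positivity
    set σα : ℝ := (∑ j ∈ F, ‖v j‖ ^ 2) ^ (α/2) with hσα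
    have hσαnn : 0 ≤ σα := Real.rpow_nonneg (Finset.sum_nonneg fun j _ => by positivity) _
    set u : Finset s → H := fun A => ∑ j ∈ F, sgn A j • (b j : H) with hu
    have hSadj : ∀ A : Finset s,
        (ContinuousLinearMap.adjoint Φ) (u A) = ∑ j ∈ F, sgn A j • v j := by
      intro A
      rw [hu, map_sum]
      refine Finset.sum_congr rfl fun j _ => ?_
      rw [(ContinuousLinearMap.adjoint Φ).map_smul, hv]
    have hinner : ∀ (c : ℝ) (A : Finset s) (h : H),
        ⟪c • u A, h⟫ = ∑ j ∈ F, sgn A j • (c * ⟪b j, h⟫) := by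
      intro c A h
      rw [real_inner_smul_left, hu, sum_inner, Finset.mul_sum]
      exact Finset.sum_congr rfl fun j _ => by
        rw [real_inner_smul_left]; simp only [smul_eq_mul]; ring
    have hmeas1 : ∀ w : H, Measurable (fun h : H => ENNReal.ofReal (1 - Real.cos ⟪w, h⟫)) := by
      intro w
      exact (continuous_const.sub (Real.continuous_cos.comp
        (innerSL ℝ w).continuous)).measurable.ennreal_ofReal
    have hmeasprod : ∀ c : ℝ, Measurable (fun h : H =>
        ENNReal.ofReal (W * (1 - ∏ j ∈ F, Real.cos (c * ⟪b j, h⟫)))) := by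
      intro c
      apply Measurable.ennreal_ofReal
      apply Continuous.measurable
      apply continuous_const.mul
      apply continuous_const.sub
      apply continuous_finset_prod
      intro j _
      exact Real.continuous_cos.comp (continuous_const.mul (innerSL ℝ (b j : H)).continuous)
    have hxmeas : Measurable (fun h : H => ENNReal.ofReal (∑ j ∈ F, ⟪b j, h⟫ ^ 2)) := by
      apply Measurable.ennreal_ofReal
      apply Continuous.measurable
      apply continuous_finset_sum
      intro j _
      exact ((innerSL ℝ (b j : H)).continuous).pow 2
    -- summed characteristic identity
    have hE : ∀ c : ℝ, 0 ≤ c →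
        ∫⁻ h, ENNReal.ofReal (W * (1 - ∏ j ∈ F, Real.cos (c * ⟪b j, h⟫))) ∂μ
          = ENNReal.ofReal (c ^ α * ∑ A ∈ F.powerset, ‖∑ j ∈ F, sgn A j • v j‖ ^ α) := by
      intro c hc
      have hA : ∀ A ∈ F.powerset,
          ∫⁻ h, ENNReal.ofReal (1 - Real.cos ⟪c • u A, h⟫) ∂μ
            = ENNReal.ofReal (c ^ α * ‖∑ j ∈ F, sgn A j • v j‖ ^ α) := by
        intro A _
        rw [hchar (c • u A)]
        congr 1
        rw [_root_.map_smul, hSadj A, norm_smul, Real.norm_eq_abs, abs_of_nonneg hc]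
        exact Real.mul_rpow hc (norm_nonneg _)
      have hpt : ∀ h : H, ∑ A ∈ F.powerset, ENNReal.ofReal (1 - Real.cos ⟪c • u A, h⟫)
          = ENNReal.ofReal (W * (1 - ∏ j ∈ F, Real.cos (c * ⟪b j, h⟫))) := by
        intro h
        rw [← ENNReal.ofReal_sum_of_nonneg
          (fun A _ => sub_nonneg.mpr (Real.cos_le_one _))]
        congr 1
        have e : ∀ A ∈ F.powerset, 1 - Real.cos ⟪c • u A, h⟫
            = 1 - Real.cos (∑ j ∈ F, sgn A j • (c * ⟪b j, h⟫)) := fun A _ => by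
          rw [hinner c A h]
        rw [Finset.sum_congr rfl e, Finset.sum_sub_distrib,
          sum_cos_signed F (fun j => c * ⟪b j, h⟫), Finset.sum_const,
          Finset.card_powerset, nsmul_eq_mul, mul_one, hW]
        push_cast
        ring
      calc ∫⁻ h, ENNReal.ofReal (W * (1 - ∏ j ∈ F, Real.cos (c * ⟪b j, h⟫))) ∂μ
          = ∫⁻ h, ∑ A ∈ F.powerset, ENNReal.ofReal (1 - Real.cos ⟪c • u A, h⟫) ∂μ := by
            apply lintegral_congr
            intro h
            rw [hpt h]
        _ = ∑ A ∈ F.powerset, ∫⁻ h, ENNReal.ofReal (1 - Real.cos ⟪c • u A, h⟫) ∂μ :=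
            lintegral_finset_sum _ (fun A _ => hmeas1 (c • u A))
        _ = ∑ A ∈ F.powerset, ENNReal.ofReal (c ^ α * ‖∑ j ∈ F, sgn A j • v j‖ ^ α) :=
            Finset.sum_congr rfl hA
        _ = ENNReal.ofReal (c ^ α * ∑ A ∈ F.powerset, ‖∑ j ∈ F, sgn A j • v j‖ ^ α) := by
            rw [← ENNReal.ofReal_sum_of_nonneg (fun A _ => by
              exact mul_nonneg (Real.rpow_nonneg hc α) (Real.rpow_nonneg (norm_nonneg _) α)),
              Finset.mul_sum]
    -- Bessel bounds on the unit ball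
    have hbd : ∀ h : H, ‖h‖ ≤ 1 →
        (∀ j ∈ F, |⟪(b j : H), h⟫| ≤ 1) ∧ ∑ j ∈ F, ⟪(b j : H), h⟫ ^ 2 ≤ 1 := by
      intro h hh
      constructor
      · intro j _
        calc |⟪(b j : H), h⟫| ≤ ‖(b j : H)‖ * ‖h‖ := abs_real_inner_le_norm _ _
          _ = ‖h‖ := by rw [b.orthonormal.1 j, one_mul]
          _ ≤ 1 := hh
      · calc ∑ j ∈ F, ⟪(b j : H), h⟫ ^ 2 = ∑ j ∈ F, ‖⟪(b j : H), h⟫‖ ^ 2 :=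
            Finset.sum_congr rfl fun j _ => by rw [Real.norm_eq_abs, sq_abs]
          _ ≤ ‖h‖ ^ 2 := b.orthonormal.sum_inner_products_le h
          _ ≤ 1 := by nlinarith [norm_nonneg h]
    set Q := ∫⁻ h in {h : H | ‖h‖ ≤ 1}, ENNReal.ofReal (∑ j ∈ F, ⟪(b j : H), h⟫ ^ 2) ∂μ
      with hQdef
    -- bound Q from the characteristic identity at c = 1
    have hQbound : ENNReal.ofReal (W/10) * Q ≤ ENNReal.ofReal (W * σα) := by
      calc ENNReal.ofReal (W/10) * Q
          = ∫⁻ h in {h : H | ‖h‖ ≤ 1},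
              ENNReal.ofReal (W/10) * ENNReal.ofReal (∑ j ∈ F, ⟪(b j : H), h⟫ ^ 2) ∂μ :=
            (lintegral_const_mul _ hxmeas).symm
        _ ≤ ∫⁻ h in {h : H | ‖h‖ ≤ 1},
              ENNReal.ofReal (W * (1 - ∏ j ∈ F, Real.cos (1 * ⟪(b j : H), h⟫))) ∂μ := by
            apply setLIntegral_mono (hmeasprod 1)
            intro h hh
            rw [← ENNReal.ofReal_mul (by positivity)]
            apply ENNReal.ofReal_le_ofReal
            obtain ⟨h1, h2⟩ := hbd h hh
            have h10 := one_sub_prod_cos_ge F (fun j => ⟪(b j : H), h⟫) h1 h2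
            have := mul_le_mul_of_nonneg_left h10 hWpos.le
            simp only [one_mul]
            linarith
        _ ≤ ∫⁻ h, ENNReal.ofReal (W * (1 - ∏ j ∈ F, Real.cos (1 * ⟪(b j : H), h⟫))) ∂μ :=
            setLIntegral_le_lintegral _ _
        _ = ENNReal.ofReal ((1:ℝ) ^ α * ∑ A ∈ F.powerset, ‖∑ j ∈ F, sgn A j • v j‖ ^ α) :=
            hE 1 zero_le_one
        _ ≤ ENNReal.ofReal (W * σα) := by
            apply ENNReal.ofReal_le_ofReal
            rw [Real.one_rpow, one_mul, hσα, hW]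
            exact sum_rpow_le F v hα hα2
    -- main chain at c = t
    have hBc : ∫⁻ h in {h : H | ‖h‖ ≤ 1}ᶜ,
        ENNReal.ofReal (W * (1 - ∏ j ∈ F, Real.cos (t * ⟪(b j : H), h⟫))) ∂μ
        ≤ ENNReal.ofReal (2*W) * μ {h : H | 1 < ‖h‖} := by
      calc ∫⁻ h in {h : H | ‖h‖ ≤ 1}ᶜ,
            ENNReal.ofReal (W * (1 - ∏ j ∈ F, Real.cos (t * ⟪(b j : H), h⟫))) ∂μ
          ≤ ∫⁻ _h in {h : H | ‖h‖ ≤ 1}ᶜ, ENNReal.ofReal (2*W) ∂μ := by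
            apply setLIntegral_mono measurable_const
            intro h _
            apply ENNReal.ofReal_le_ofReal
            have := one_sub_prod_cos_le_two F (fun j => t * ⟪(b j : H), h⟫)
            nlinarith
        _ = ENNReal.ofReal (2*W) * μ ({h : H | ‖h‖ ≤ 1}ᶜ) := setLIntegral_const _ _
        _ = ENNReal.ofReal (2*W) * μ {h : H | 1 < ‖h‖} := by rw [hcompl]
    have hBin : ∫⁻ h in {h : H | ‖h‖ ≤ 1},
        ENNReal.ofReal (W * (1 - ∏ j ∈ F, Real.cos (t * ⟪(b j : H), h⟫))) ∂μ
        ≤ ENNReal.ofReal (W * t^(2:ℕ) / 2) * Q := by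
      calc ∫⁻ h in {h : H | ‖h‖ ≤ 1},
            ENNReal.ofReal (W * (1 - ∏ j ∈ F, Real.cos (t * ⟪(b j : H), h⟫))) ∂μ
          ≤ ∫⁻ h in {h : H | ‖h‖ ≤ 1},
              ENNReal.ofReal (W * t^(2:ℕ) / 2)
                * ENNReal.ofReal (∑ j ∈ F, ⟪(b j : H), h⟫ ^ 2) ∂μ := by
            apply setLIntegral_mono (Measurable.const_mul hxmeas _)
            intro h _
            rw [← ENNReal.ofReal_mul (by positivity)]
            apply ENNReal.ofReal_le_ofReal
            have hle := one_sub_prod_cos_le F (fun j => t * ⟪(b j : H), h⟫)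
            have hsq : ∑ j ∈ F, (t * ⟪(b j : H), h⟫) ^ 2
                = t^(2:ℕ) * ∑ j ∈ F, ⟪(b j : H), h⟫ ^ 2 := by
              rw [Finset.mul_sum]
              exact Finset.sum_congr rfl fun j _ => by ring
            rw [hsq] at hle
            have hsnn : (0:ℝ) ≤ ∑ j ∈ F, ⟪(b j : H), h⟫ ^ 2 :=
              Finset.sum_nonneg fun j _ => sq_nonneg _
            nlinarith
        _ = ENNReal.ofReal (W * t^(2:ℕ) / 2) * Q := lintegral_const_mul _ hxmeas
    have big : ENNReal.ofReal (t ^ α * (W * σα / 3))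
        ≤ ENNReal.ofReal (5 * t^(2:ℕ) * (W * σα))
          + ENNReal.ofReal (2*W) * μ {h : H | 1 < ‖h‖} := by
      calc ENNReal.ofReal (t ^ α * (W * σα / 3))
          ≤ ENNReal.ofReal (t ^ α * ∑ A ∈ F.powerset, ‖∑ j ∈ F, sgn A j • v j‖ ^ α) := by
            apply ENNReal.ofReal_le_ofReal
            apply mul_le_mul_of_nonneg_left _ htα.le
            have := sum_rpow_ge F v hα hα2
            rw [hσα, hW]
            linarith
        _ = ∫⁻ h, ENNReal.ofReal (W * (1 - ∏ j ∈ F, Real.cos (t * ⟪(b j : H), h⟫))) ∂μ :=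
            (hE t ht.le).symm
        _ = (∫⁻ h in {h : H | ‖h‖ ≤ 1},
              ENNReal.ofReal (W * (1 - ∏ j ∈ F, Real.cos (t * ⟪(b j : H), h⟫))) ∂μ)
            + ∫⁻ h in {h : H | ‖h‖ ≤ 1}ᶜ,
              ENNReal.ofReal (W * (1 - ∏ j ∈ F, Real.cos (t * ⟪(b j : H), h⟫))) ∂μ :=
            (lintegral_add_compl _ hBmeas).symm
        _ ≤ ENNReal.ofReal (W * t^(2:ℕ) / 2) * Q
            + ENNReal.ofReal (2*W) * μ {h : H | 1 < ‖h‖} := add_le_add hBin hBc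
        _ ≤ ENNReal.ofReal (5 * t^(2:ℕ) * (W * σα))
            + ENNReal.ofReal (2*W) * μ {h : H | 1 < ‖h‖} := by
            apply add_le_add_left
            calc ENNReal.ofReal (W * t^(2:ℕ) / 2) * Q
                = ENNReal.ofReal (5 * t^(2:ℕ)) * (ENNReal.ofReal (W/10) * Q) := by
                  rw [← mul_assoc, ← ENNReal.ofReal_mul (by positivity)]
                  congr 2
                  ring
              _ ≤ ENNReal.ofReal (5 * t^(2:ℕ)) * ENNReal.ofReal (W * σα) := by
                  exact mul_le_mul_right hQbound _
              _ = ENNReal.ofReal (5 * t^(2:ℕ) * (W * σα)) := by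
                  rw [← ENNReal.ofReal_mul (by positivity)]
    -- pass to real numbers
    set τ : ℝ := (μ {h : H | 1 < ‖h‖}).toReal with hτ
    have hτnn : 0 ≤ τ := ENNReal.toReal_nonneg
    have hμτ : μ {h : H | 1 < ‖h‖} = ENNReal.ofReal τ := (ENNReal.ofReal_toReal hT).symm
    rw [hμτ, ← ENNReal.ofReal_mul (by positivity), ← ENNReal.ofReal_add (by positivity)
      (by positivity)] at big
    have bigR : t ^ α * (W * σα / 3) ≤ 5 * t^(2:ℕ) * (W * σα) + 2*W*τ :=
      (ENNReal.ofReal_le_ofReal_iff (by positivity)).mp big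
    have ht2' : t^(2:ℕ) = t ^ α * (1/30) := by
      rw [← Real.rpow_two, ht2]
    rw [ht2'] at bigR
    have hdiv : t ^ α * σα / 3 ≤ t ^ α * σα / 6 + 2*τ := by
      have h1 : W * (t ^ α * σα / 3) ≤ W * (t ^ α * σα / 6 + 2*τ) := by nlinarith
      exact le_of_mul_le_mul_left h1 hWpos
    rw [hσα]
    linarith
  -- pass to the limit along finsets
  have hHasSum : HasSum (fun j : s => ‖v j‖ ^ 2) (∑' i, ‖Φ (bG i)‖ ^ 2) := by
    have h := hsumma.hasSum
    rwa [hSa] at h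
  have hTend : Filter.Tendsto (fun F : Finset s => t ^ α * ((∑ j ∈ F, ‖v j‖ ^ 2) ^ (α/2)) / 12)
      Filter.atTop (nhds (t ^ α * ((∑' i, ‖Φ (bG i)‖ ^ 2) ^ (α/2)) / 12)) := by
    apply Filter.Tendsto.div_const
    apply Filter.Tendsto.const_mul
    exact hHasSum.rpow_const (Or.inr (by positivity))
  have hfinal : t ^ α * ((∑' i, ‖Φ (bG i)‖ ^ 2) ^ (α/2)) / 12 ≤ (μ {h : H | 1 < ‖h‖}).toReal :=
    le_of_tendsto hTend (Filter.Eventually.of_forall key)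
  have hcinv : (12 * (t ^ α)⁻¹)⁻¹ * ((∑' i, ‖Φ (bG i)‖ ^ 2) ^ (α/2))
      = t ^ α * ((∑' i, ‖Φ (bG i)‖ ^ 2) ^ (α/2)) / 12 := by
    rw [mul_inv, inv_inv]
    ring
  rw [hcinv, ENNReal.ofReal_le_iff_le_toReal hT]
  exact hfinal
end
end

section
/- Let λ be the cylindrical Lévy measure of the canonical α-stable cylindrical Lévy process on G, α ∈ (0,2). Then there exists c_α > 0 such that for every measurable function ψ : [0,T] → L₂(G,H), ∫₀^T ‖ψ(t)‖_HS^α dt ≤ c_α ∫₀^T ∫_H (‖h‖² ∧ 1) (λ ∘ ψ(t)⁻¹)(dh) dt. -/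
open MeasureTheory RealInnerProductSpace

noncomputable section

namespace Stmt4Aux

open Finset

def sgn (b : Bool) : ℝ := if b then 1 else -1

lemma sgn_sq (b : Bool) : sgn b ^ 2 = 1 := by cases b <;> simp [sgn]

lemma sgn_true : sgn true = 1 := rfl
lemma sgn_false : sgn false = -1 := rfl

variable {E : Type*} [NormedAddCommGroup E] [InnerProductSpace ℝ E]

/-- signed sum -/
def S (n : ℕ) (v : Fin n → E) (σ : Fin n → Bool) : E := ∑ j, sgn (σ j) • v j

lemma S_succ (n : ℕ) (v : Fin (n+1) → E) (b : Bool) (τ : Fin n → Bool) :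
    S (n+1) v (Fin.cons b τ) = sgn b • v 0 + S n (v ∘ Fin.succ) τ := by
  simp [S, Fin.sum_univ_succ]

lemma sum_piFinSucc (n : ℕ) (f : (Fin (n+1) → Bool) → ℝ) :
    ∑ σ : Fin (n+1) → Bool, f σ = ∑ b : Bool, ∑ τ : Fin n → Bool, f (Fin.cons b τ) := by
  rw [← (Fin.consEquiv (fun _ : Fin (n+1) => Bool)).sum_comp f, Fintype.sum_prod_type]
  rfl

lemma expand (x w : E) (a : ℝ) (ha : a ^ 2 = 1) :
    ‖a • x + w‖ ^ 2 = ‖x‖ ^ 2 + 2 * a * ⟪x, w⟫ + ‖w‖ ^ 2 := by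
  rw [norm_add_sq_real, real_inner_smul_left, norm_smul]
  have : ‖a‖ ^ 2 = 1 := by rwa [Real.norm_eq_abs, sq_abs]
  rw [mul_pow, this]
  ring

lemma moment2 (n : ℕ) (v : Fin n → E) :
    ∑ σ : Fin n → Bool, ‖S n v σ‖ ^ 2 = 2 ^ n * ∑ j, ‖v j‖ ^ 2 := by
  induction n with
  | zero => simp [S]
  | succ n ih =>
    rw [sum_piFinSucc]
    simp only [Fintype.sum_bool]
    rw [← Finset.sum_add_distrib]
    set w := v ∘ Fin.succ with hw
    have hsum : ∑ j, ‖v j‖ ^ 2 = ‖v 0‖ ^ 2 + ∑ j, ‖w j‖ ^ 2 := by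
      rw [Fin.sum_univ_succ (f := fun j => ‖v j‖ ^ 2)]; rfl
    have key : ∀ τ, ‖S (n+1) v (Fin.cons true τ)‖ ^ 2 + ‖S (n+1) v (Fin.cons false τ)‖ ^ 2
        = 2 * ‖v 0‖ ^ 2 + 2 * ‖S n w τ‖ ^ 2 := by
      intro τ
      rw [S_succ, S_succ, expand _ _ _ (sgn_sq true), expand _ _ _ (sgn_sq false),
        sgn_true, sgn_false]
      ring
    simp only [key]
    rw [Finset.sum_add_distrib, Finset.sum_const, Finset.card_univ, ← Finset.mul_sum,
      ih w, hsum]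
    simp only [nsmul_eq_mul, Fintype.card_fun, Fintype.card_bool, Fintype.card_fin]
    push_cast
    ring

lemma moment4 (n : ℕ) (v : Fin n → E) :
    ∑ σ : Fin n → Bool, (‖S n v σ‖ ^ 2) ^ 2 ≤ 3 * 2 ^ n * (∑ j, ‖v j‖ ^ 2) ^ 2 := by
  induction n with
  | zero => simp [S]
  | succ n ih =>
    rw [sum_piFinSucc]
    simp only [Fintype.sum_bool]
    rw [← Finset.sum_add_distrib]
    set w := v ∘ Fin.succ with hw
    have h2 := moment2 n w
    have h4 := ih w
    have hsum : ∑ j, ‖v j‖ ^ 2 = ‖v 0‖ ^ 2 + ∑ j, ‖w j‖ ^ 2 := by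
      rw [Fin.sum_univ_succ (f := fun j => ‖v j‖ ^ 2)]; rfl
    have hnn : (0:ℝ) ≤ ∑ j, ‖w j‖ ^ 2 := Finset.sum_nonneg fun j _ => sq_nonneg _
    have hv0 : (0:ℝ) ≤ ‖v 0‖ ^ 2 := sq_nonneg _
    have key : ∀ τ, (‖S (n+1) v (Fin.cons true τ)‖ ^ 2) ^ 2 + (‖S (n+1) v (Fin.cons false τ)‖ ^ 2) ^ 2
        ≤ 2 * ‖v 0‖ ^ 2 ^ 2 + 12 * ‖v 0‖ ^ 2 * ‖S n w τ‖ ^ 2 + 2 * (‖S n w τ‖ ^ 2) ^ 2 := by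
      intro τ
      rw [S_succ, S_succ, expand _ _ _ (sgn_sq true), expand _ _ _ (sgn_sq false),
        sgn_true, sgn_false]
      simp only [← hw]
      have hcs : ⟪v 0, S n w τ⟫ ^ 2 ≤ ‖v 0‖ ^ 2 * ‖S n w τ‖ ^ 2 := by
        rw [← mul_pow]
        calc ⟪v 0, S n w τ⟫ ^ 2 = |⟪v 0, S n w τ⟫| ^ 2 := (sq_abs _).symm
          _ ≤ (‖v 0‖ * ‖S n w τ‖) ^ 2 :=
            pow_le_pow_left₀ (abs_nonneg _) (abs_real_inner_le_norm _ _) 2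
      have hexp : (‖v 0‖^2 + 2*1*⟪v 0, S n w τ⟫ + ‖S n w τ‖^2)^2
          + (‖v 0‖^2 + 2*(-1)*⟪v 0, S n w τ⟫ + ‖S n w τ‖^2)^2
          = 2*‖v 0‖^2^2 + 4*(‖v 0‖^2*‖S n w τ‖^2) + 2*(‖S n w τ‖^2)^2
            + 8*⟪v 0, S n w τ⟫^2 := by ring
      rw [hexp]
      linarith [hcs]
    calc ∑ τ : Fin n → Bool,
          ((‖S (n+1) v (Fin.cons true τ)‖ ^ 2) ^ 2 + (‖S (n+1) v (Fin.cons false τ)‖ ^ 2) ^ 2)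
        ≤ ∑ τ : Fin n → Bool,
          (2 * ‖v 0‖ ^ 2 ^ 2 + 12 * ‖v 0‖ ^ 2 * ‖S n w τ‖ ^ 2 + 2 * (‖S n w τ‖ ^ 2) ^ 2) :=
          Finset.sum_le_sum fun τ _ => key τ
      _ ≤ 3 * 2 ^ (n+1) * (∑ j, ‖v j‖ ^ 2) ^ 2 := by
          rw [Finset.sum_add_distrib, Finset.sum_add_distrib, Finset.sum_const,
            Finset.card_univ, ← Finset.mul_sum, ← Finset.mul_sum, h2, hsum]
          simp only [nsmul_eq_mul, Fintype.card_fun, Fintype.card_bool, Fintype.card_fin]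
          push_cast
          have hp : (0:ℝ) < 2 ^ n := by positivity
          have hpow : (2:ℝ) ^ (n+1) = 2 * 2 ^ n := by ring
          rw [hpow]
          nlinarith [h4, hp, hv0, hnn, mul_nonneg hp.le (sq_nonneg (‖v 0‖ ^ 2)),
            mul_nonneg hp.le (mul_nonneg hnn hnn), mul_nonneg hp.le (mul_nonneg hv0 hnn)]


lemma pz {Ω : Type*} [Fintype Ω] (x : Ω → ℝ) (hx : ∀ σ, 0 ≤ x σ) (m : ℝ) (hm : 0 ≤ m)
    (N : ℕ) (hN : 0 < N) (hcard : Fintype.card Ω = N)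
    (h1 : ∑ σ, x σ = N * m) (h2 : ∑ σ, (x σ)^2 ≤ 3 * N * m^2)
    (β : ℝ) (hβ : 0 < β) :
    (N:ℝ)/12 * (m/2) ^ β ≤ ∑ σ, (x σ) ^ β := by
  rcases eq_or_lt_of_le hm with h|h
  · rw [← h]
    simp [Real.zero_rpow hβ.ne']
    exact Finset.sum_nonneg fun σ _ => Real.rpow_nonneg (hx σ) β
  · classical
    set A := Finset.univ.filter (fun σ => m/2 ≤ x σ) with hA
    have hsplit : ∑ σ ∈ A, x σ + ∑ σ ∈ Aᶜ, x σ = (N:ℝ) * m := by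
      rw [Finset.sum_add_sum_compl, h1]
    have hcompl : ∑ σ ∈ Aᶜ, x σ ≤ (N:ℝ) * (m/2) := by
      calc ∑ σ ∈ Aᶜ, x σ ≤ ∑ σ ∈ Aᶜ, (m/2) := by
            apply Finset.sum_le_sum
            intro σ hσ
            simp only [hA, Finset.mem_compl, Finset.mem_filter, Finset.mem_univ,
              true_and, not_le] at hσ
            exact hσ.le
        _ = Aᶜ.card * (m/2) := by rw [Finset.sum_const, nsmul_eq_mul]
        _ ≤ (N:ℝ) * (m/2) := by
            apply mul_le_mul_of_nonneg_right _ (by linarith)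
            have := Finset.card_le_card (Finset.subset_univ Aᶜ)
            rw [Finset.card_univ, hcard] at this
            exact_mod_cast this
    have hA1 : (N:ℝ) * m / 2 ≤ ∑ σ ∈ A, x σ := by linarith
    have hcs : (∑ σ ∈ A, x σ) ^ 2 ≤ (∑ σ ∈ A, (x σ)^2) * A.card := by
      have := Finset.sum_mul_sq_le_sq_mul_sq A x (fun _ => 1)
      simpa using this
    have hsub : ∑ σ ∈ A, (x σ)^2 ≤ 3 * N * m^2 := by
      refine le_trans (Finset.sum_le_sum_of_subset_of_nonneg (Finset.subset_univ A) ?_) h2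
      intro σ _ _; exact sq_nonneg _
    have hcardA : (N:ℝ)/12 ≤ A.card := by
      have hNm : (0:ℝ) < N * m := by
        have : (0:ℝ) < N := by exact_mod_cast hN
        positivity
      have hsq : ((N:ℝ) * m / 2)^2 ≤ (∑ σ ∈ A, x σ)^2 :=
        pow_le_pow_left₀ (by positivity) hA1 2
      have hxnn : (0:ℝ) ≤ ∑ σ ∈ A, (x σ)^2 := Finset.sum_nonneg fun σ _ => sq_nonneg _
      have hcA : (0:ℝ) ≤ A.card := Nat.cast_nonneg A.card
      have hNpos : (0:ℝ) < N := by exact_mod_cast hN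
      have p1 : (∑ σ ∈ A, (x σ)^2) * A.card ≤ (3 * N * m^2) * A.card :=
        mul_le_mul_of_nonneg_right hsub hcA
      have h3 : (0:ℝ) < 3 * N * m^2 := by positivity
      nlinarith [hsq, hcs, p1, h3]
    calc (N:ℝ)/12 * (m/2) ^ β ≤ (A.card : ℝ) * (m/2) ^ β := by
          apply mul_le_mul_of_nonneg_right hcardA (Real.rpow_nonneg (by linarith) β)
      _ = ∑ σ ∈ A, (m/2 : ℝ) ^ β := by rw [Finset.sum_const, nsmul_eq_mul]
      _ ≤ ∑ σ ∈ A, (x σ) ^ β := by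
          apply Finset.sum_le_sum
          intro σ hσ
          simp only [hA, Finset.mem_filter] at hσ
          exact Real.rpow_le_rpow (by linarith) hσ.2 hβ.le
      _ ≤ ∑ σ, (x σ) ^ β := by
          refine Finset.sum_le_sum_of_subset_of_nonneg (Finset.subset_univ A) ?_
          intro σ _ _; exact Real.rpow_nonneg (hx σ) β


lemma core
    {G : Type} [NormedAddCommGroup G] [InnerProductSpace ℝ G] [CompleteSpace G]
    {H : Type} [NormedAddCommGroup H] [InnerProductSpace ℝ H] [CompleteSpace H]
    [MeasurableSpace H] [BorelSpace H]
    (α : ℝ) (hα : 0 < α)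
    (n : ℕ) (e : Fin n → H) (he : Orthonormal ℝ e) (φ : G →L[ℝ] H) (μ : Measure H)
    (hchar : ∀ u : H, ∫⁻ h, ENNReal.ofReal (1 - Real.cos ⟪u, h⟫) ∂μ
        = ENNReal.ofReal (‖(ContinuousLinearMap.adjoint φ) u‖ ^ α)) :
    ENNReal.ofReal ((∑ j, ‖(ContinuousLinearMap.adjoint φ) (e j)‖ ^ 2) ^ (α/2))
      ≤ ENNReal.ofReal (24 * 2 ^ (α/2)) * ∫⁻ h, min ((‖h‖₊ : ENNReal) ^ 2) 1 ∂μ := by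
  classical
  set Φ := ContinuousLinearMap.adjoint φ with hΦ
  set v : Fin n → G := fun j => Φ (e j) with hv
  set m : ℝ := ∑ j, ‖v j‖ ^ 2 with hm
  have hm0 : 0 ≤ m := Finset.sum_nonneg fun j _ => sq_nonneg _
  set N : ℕ := 2 ^ n with hN
  have hNpos : 0 < N := Nat.pow_pos (by norm_num)
  -- x σ = ‖Φ (S n e σ)‖ ^ 2
  have hΦS : ∀ σ : Fin n → Bool, Φ (S n e σ) = S n v σ := by
    intro σ
    simp only [S, map_sum, ContinuousLinearMap.map_smul]
    rfl
  set x : (Fin n → Bool) → ℝ := fun σ => ‖S n v σ‖ ^ 2 with hx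
  have hxnn : ∀ σ, 0 ≤ x σ := fun σ => sq_nonneg _
  have h1 : ∑ σ, x σ = (N:ℝ) * m := by
    rw [hx, moment2 n v, hm, hN]; push_cast; ring
  have h2 : ∑ σ, (x σ)^2 ≤ 3 * (N:ℝ) * m^2 := by
    have := moment4 n v
    rw [hx, hm, hN]; push_cast; push_cast at this; linarith
  have hcard : Fintype.card (Fin n → Bool) = N := by
    simp [hN]
  have hPZ := pz x hxnn m hm0 N hNpos hcard h1 h2 (α/2) (by linarith)
  -- identify x σ ^ (α/2) with ‖S n v σ‖ ^ α
  have hrpow : ∀ σ, x σ ^ (α/2) = ‖S n v σ‖ ^ α := by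
    intro σ
    have hxσ : x σ = ‖S n v σ‖ ^ 2 := rfl
    rw [hxσ]
    rw [← Real.rpow_natCast (‖S n v σ‖) 2, ← Real.rpow_mul (norm_nonneg _)]
    norm_num
    congr 1
    ring
  -- main chain
  set I : ENNReal := ∫⁻ h, min ((‖h‖₊ : ENNReal) ^ 2) 1 ∂μ with hI
  have hmeas : ∀ σ : Fin n → Bool, Measurable fun h : H =>
      ENNReal.ofReal (1 - Real.cos ⟪S n e σ, h⟫) := by
    intro σ
    have hc : Continuous fun h : H => 1 - Real.cos ⟪S n e σ, h⟫ :=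
      continuous_const.sub (Real.continuous_cos.comp (continuous_const.inner continuous_id))
    exact (ENNReal.continuous_ofReal.comp hc).measurable
  have hpoint : ∀ h : H, ∑ σ : Fin n → Bool, ENNReal.ofReal (1 - Real.cos ⟪S n e σ, h⟫)
      ≤ ENNReal.ofReal (2 * N) * min ((‖h‖₊ : ENNReal) ^ 2) 1 := by
    intro h
    have hb : ∀ σ : Fin n → Bool, 0 ≤ 1 - Real.cos ⟪S n e σ, h⟫ := by
      intro σ; have := Real.cos_le_one ⟪S n e σ, h⟫; linarith
    rw [← ENNReal.ofReal_sum_of_nonneg (fun σ _ => hb σ)]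
    have hreal : ∑ σ : Fin n → Bool, (1 - Real.cos ⟪S n e σ, h⟫)
        ≤ 2 * N * min (‖h‖^2) 1 := by
      -- two bounds
      have hup1 : ∑ σ : Fin n → Bool, (1 - Real.cos ⟪S n e σ, h⟫) ≤ 2 * N := by
        calc ∑ σ : Fin n → Bool, (1 - Real.cos ⟪S n e σ, h⟫)
            ≤ ∑ σ : Fin n → Bool, (2:ℝ) := by
              apply Finset.sum_le_sum
              intro σ _
              have := Real.neg_one_le_cos ⟪S n e σ, h⟫; linarith
          _ = 2 * N := by
              rw [Finset.sum_const, Finset.card_univ, hcard, nsmul_eq_mul]; ring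
      have hup2 : ∑ σ : Fin n → Bool, (1 - Real.cos ⟪S n e σ, h⟫) ≤ N * ‖h‖^2 / 2 := by
        have hInner : ∀ σ : Fin n → Bool, ⟪S n e σ, h⟫ = S n (fun j => ⟪e j, h⟫) σ := by
          intro σ
          simp only [S, sum_inner, real_inner_smul_left, smul_eq_mul]
        have hsq : ∑ σ : Fin n → Bool, ⟪S n e σ, h⟫ ^ 2 = N * ∑ j, ⟪e j, h⟫^2 := by
          have := moment2 (E := ℝ) n (fun j => ⟪e j, h⟫)
          simp only [Real.norm_eq_abs, sq_abs] at this
          calc ∑ σ : Fin n → Bool, ⟪S n e σ, h⟫ ^ 2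
              = ∑ σ : Fin n → Bool, (S n (fun j => ⟪e j, h⟫) σ) ^ 2 := by
                apply Finset.sum_congr rfl; intro σ _; rw [hInner]
            _ = (N:ℝ) * ∑ j, ⟪e j, h⟫^2 := by rw [this, hN]; push_cast; ring
        have hBessel : ∑ j, ⟪e j, h⟫^2 ≤ ‖h‖^2 := by
          have := he.sum_inner_products_le (𝕜 := ℝ) (s := Finset.univ) h
          simpa [Real.norm_eq_abs, sq_abs] using this
        calc ∑ σ : Fin n → Bool, (1 - Real.cos ⟪S n e σ, h⟫)
            ≤ ∑ σ : Fin n → Bool, ⟪S n e σ, h⟫^2 / 2 := by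
              apply Finset.sum_le_sum
              intro σ _
              have := Real.one_sub_sq_div_two_le_cos (x := ⟪S n e σ, h⟫); linarith
          _ = (∑ σ : Fin n → Bool, ⟪S n e σ, h⟫^2) / 2 := by rw [Finset.sum_div]
          _ ≤ N * ‖h‖^2 / 2 := by
              rw [hsq]
              have := mul_le_mul_of_nonneg_left hBessel (by positivity : (0:ℝ) ≤ (N:ℝ))
              linarith
      rcases le_total (‖h‖^2) 1 with hc | hc
      · rw [min_eq_left hc]
        have hN2 : (0:ℝ) ≤ N := by positivity
        nlinarith [hup2, sq_nonneg ‖h‖]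
      · rw [min_eq_right hc]
        linarith
    calc ENNReal.ofReal (∑ σ : Fin n → Bool, (1 - Real.cos ⟪S n e σ, h⟫))
        ≤ ENNReal.ofReal (2 * N * min (‖h‖^2) 1) := ENNReal.ofReal_le_ofReal hreal
      _ = ENNReal.ofReal (2 * N) * min ((‖h‖₊ : ENNReal) ^ 2) 1 := by
          rw [ENNReal.ofReal_mul (by positivity)]
          congr 1
          have hmono : Monotone ENNReal.ofReal := fun a b hab => ENNReal.ofReal_le_ofReal hab
          rw [hmono.map_min]
          congr 1
          · rw [ENNReal.ofReal_pow (norm_nonneg h), ofReal_norm]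
            rfl
          · exact ENNReal.ofReal_one
  -- combine
  have hchain : ENNReal.ofReal ((N:ℝ)/12 * (m/2) ^ (α/2)) ≤ ENNReal.ofReal (2 * N) * I := by
    calc ENNReal.ofReal ((N:ℝ)/12 * (m/2) ^ (α/2))
        ≤ ENNReal.ofReal (∑ σ, (x σ) ^ (α/2)) := ENNReal.ofReal_le_ofReal hPZ
      _ = ∑ σ, ENNReal.ofReal ((x σ) ^ (α/2)) :=
          ENNReal.ofReal_sum_of_nonneg (fun σ _ => Real.rpow_nonneg (hxnn σ) _)
      _ = ∑ σ : Fin n → Bool, ∫⁻ h, ENNReal.ofReal (1 - Real.cos ⟪S n e σ, h⟫) ∂μ := by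
          apply Finset.sum_congr rfl
          intro σ _
          rw [hchar (S n e σ), hΦS σ, hrpow σ]
      _ = ∫⁻ h, ∑ σ : Fin n → Bool, ENNReal.ofReal (1 - Real.cos ⟪S n e σ, h⟫) ∂μ :=
          (lintegral_finset_sum _ (fun σ _ => hmeas σ)).symm
      _ ≤ ∫⁻ h, ENNReal.ofReal (2 * N) * min ((‖h‖₊ : ENNReal) ^ 2) 1 ∂μ :=
          lintegral_mono hpoint
      _ = ENNReal.ofReal (2 * N) * I := lintegral_const_mul' _ _ ENNReal.ofReal_ne_top
  -- conclude
  rcases eq_or_ne I ⊤ with hItop | hIfin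
  · rw [hItop, ENNReal.mul_top]
    · exact le_top
    · simp only [ne_eq, ENNReal.ofReal_eq_zero, not_le]
      positivity
  · have hIr : I = ENNReal.ofReal I.toReal := by rw [ENNReal.ofReal_toReal hIfin]
    have hrnn : 0 ≤ I.toReal := ENNReal.toReal_nonneg
    rw [hIr, ← ENNReal.ofReal_mul (by positivity)] at hchain
    have hrealineq : (N:ℝ)/12 * (m/2) ^ (α/2) ≤ 2 * N * I.toReal :=
      (ENNReal.ofReal_le_ofReal_iff (by positivity)).mp hchain
    have hfinal : m ^ (α/2) ≤ 24 * 2 ^ (α/2) * I.toReal := by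
      have hNr : (0:ℝ) < N := by positivity
      have hdiv : (m/2) ^ (α/2) = m ^ (α/2) / 2 ^ (α/2) := Real.div_rpow hm0 (by norm_num : (0:ℝ) ≤ 2) (α/2)
      rw [hdiv] at hrealineq
      have h2p : (0:ℝ) < 2 ^ (α/2) := Real.rpow_pos_of_pos (by norm_num) _
      have key : (N:ℝ) * (m ^ (α/2)) ≤ N * (24 * 2 ^ (α/2) * I.toReal) := by
        have h12 : ↑N / 12 * (m ^ (α/2) / 2 ^ (α/2)) * (12 * 2 ^ (α/2))
            ≤ 2 * ↑N * I.toReal * (12 * 2 ^ (α/2)) :=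
          mul_le_mul_of_nonneg_right hrealineq (by positivity)
        calc (N:ℝ) * (m ^ (α/2))
            = ↑N / 12 * (m ^ (α/2) / 2 ^ (α/2)) * (12 * 2 ^ (α/2)) := by
              field_simp
          _ ≤ 2 * ↑N * I.toReal * (12 * 2 ^ (α/2)) := h12
          _ = N * (24 * 2 ^ (α/2) * I.toReal) := by ring
      exact le_of_mul_le_mul_left key hNr
    calc ENNReal.ofReal (m ^ (α/2)) ≤ ENNReal.ofReal (24 * 2 ^ (α/2) * I.toReal) :=
          ENNReal.ofReal_le_ofReal hfinal
      _ = ENNReal.ofReal (24 * 2 ^ (α/2)) * ENNReal.ofReal I.toReal := by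
          rw [ENNReal.ofReal_mul (by positivity)]
      _ = ENNReal.ofReal (24 * 2 ^ (α/2)) * I := by rw [← hIr]


lemma pointwise
    {G : Type} [NormedAddCommGroup G] [InnerProductSpace ℝ G] [CompleteSpace G]
    {H : Type} [NormedAddCommGroup H] [InnerProductSpace ℝ H] [CompleteSpace H]
    [MeasurableSpace H] [BorelSpace H] [SecondCountableTopology H]
    (bG : HilbertBasis ℕ ℝ G)
    (α : ℝ) (hα : 0 < α)
    (φ : G →L[ℝ] H) (hHS : Summable fun i => ‖φ (bG i)‖ ^ 2) (μ : Measure H)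
    (hchar : ∀ u : H, ∫⁻ h, ENNReal.ofReal (1 - Real.cos ⟪u, h⟫) ∂μ
        = ENNReal.ofReal (‖(ContinuousLinearMap.adjoint φ) u‖ ^ α)) :
    ENNReal.ofReal ((∑' i, ‖φ (bG i)‖ ^ 2) ^ (α/2))
      ≤ ENNReal.ofReal (24 * 2 ^ (α/2)) * ∫⁻ h, min ((‖h‖₊ : ENNReal) ^ 2) 1 ∂μ := by
  classical
  obtain ⟨w, b, hb⟩ := exists_hilbertBasis ℝ H
  set Φ := ContinuousLinearMap.adjoint φ with hΦ
  set M : ℝ := ∑' i, ‖φ (bG i)‖ ^ 2 with hM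
  set f : w → ℝ := fun j => ‖Φ (b j)‖ ^ 2 with hf
  -- Parseval for bG :  for any x : G, HasSum of inner squares
  have hP1 : ∀ x : G, HasSum (fun i : ℕ => ⟪x, bG i⟫ ^ 2) (‖x‖ ^ 2) := by
    intro x
    have := bG.hasSum_inner_mul_inner x x
    simp only [← real_inner_self_eq_norm_sq] at *
    convert this using 2 with i
    · rfl
    rw [sq, real_inner_comm x (bG i)]
  have hP2 : ∀ x : H, HasSum (fun j : w => ⟪x, b j⟫ ^ 2) (‖x‖ ^ 2) := by
    intro x
    have := b.hasSum_inner_mul_inner x x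
    simp only [← real_inner_self_eq_norm_sq] at *
    convert this using 2 with j
    · rfl
    rw [sq, real_inner_comm x (b j)]
  -- double sum identity in ℝ≥0∞
  have hdouble : ENNReal.ofReal M = ∑' j : w, ENNReal.ofReal (f j) := by
    calc ENNReal.ofReal M = ∑' i, ENNReal.ofReal (‖φ (bG i)‖ ^ 2) :=
          ENNReal.ofReal_tsum_of_nonneg (fun i => sq_nonneg _) hHS
      _ = ∑' i, ∑' j : w, ENNReal.ofReal (⟪φ (bG i), b j⟫ ^ 2) := by
          apply tsum_congr
          intro i
          rw [← (hP2 (φ (bG i))).tsum_eq,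
            ENNReal.ofReal_tsum_of_nonneg (fun j => sq_nonneg _) (hP2 (φ (bG i))).summable]
      _ = ∑' j : w, ∑' i, ENNReal.ofReal (⟪φ (bG i), b j⟫ ^ 2) := ENNReal.tsum_comm
      _ = ∑' j : w, ENNReal.ofReal (f j) := by
          apply tsum_congr
          intro j
          have hadj : ∀ i, ⟪φ (bG i), b j⟫ = ⟪Φ (b j), bG i⟫ := by
            intro i
            rw [hΦ, ContinuousLinearMap.adjoint_inner_left, real_inner_comm]
          simp only [hadj]
          rw [← ENNReal.ofReal_tsum_of_nonneg (fun i => sq_nonneg _) (hP1 (Φ (b j))).summable,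
            (hP1 (Φ (b j))).tsum_eq]
  have hMnn : 0 ≤ M := tsum_nonneg (fun i => sq_nonneg _)
  -- summability of f and its sum
  have hfsummable : Summable f := by
    have hne : ∑' j : w, ENNReal.ofReal (f j) ≠ ⊤ := by
      rw [← hdouble]; exact ENNReal.ofReal_ne_top
    have := ENNReal.summable_toReal hne
    exact this.congr fun j => ENNReal.toReal_ofReal (sq_nonneg _)
  have hfsum : HasSum f M := by
    have h1 : ENNReal.ofReal (∑' j, f j) = ENNReal.ofReal M := by
      rw [ENNReal.ofReal_tsum_of_nonneg (fun j => sq_nonneg _) hfsummable, hdouble]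
    have h2 : ∑' j, f j = M := by
      have := (ENNReal.ofReal_eq_ofReal_iff
        (tsum_nonneg (fun j => sq_nonneg _)) hMnn).mp h1
      exact this
    exact h2 ▸ hfsummable.hasSum
  -- limit argument
  set I : ENNReal := ∫⁻ h, min ((‖h‖₊ : ENNReal) ^ 2) 1 ∂μ with hI
  have hcont : ContinuousAt (fun x : ℝ => ENNReal.ofReal (x ^ (α/2))) M :=
    ENNReal.continuous_ofReal.continuousAt.comp
      (Real.continuousAt_rpow_const M (α/2) (Or.inr (by linarith)))
  have htend : Filter.Tendsto (fun s : Finset w => ENNReal.ofReal ((∑ j ∈ s, f j) ^ (α/2)))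
      Filter.atTop (nhds (ENNReal.ofReal (M ^ (α/2)))) :=
    hcont.tendsto.comp hfsum
  refine le_of_tendsto' htend ?_
  intro s
  -- apply core with the finite orthonormal family indexed by `s`
  set n := s.card with hn
  set es : Fin n → H := fun i => ((s.equivFin.symm i : w) : H) with hes
  have hes_on : Orthonormal ℝ es := by
    have hbon : Orthonormal ℝ (fun j : w => (j : H)) := hb ▸ b.orthonormal
    exact hbon.comp (fun i => (s.equivFin.symm i : w))
      (fun i i' hii => by
        apply s.equivFin.symm.injective
        exact Subtype.coe_injective hii)
  have hsum_eq : ∑ i, ‖Φ (es i)‖ ^ 2 = ∑ j ∈ s, f j := by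
    have h1 : ∑ i, ‖Φ (es i)‖ ^ 2 = ∑ x : s, ‖Φ ((x : w) : H)‖ ^ 2 :=
      Equiv.sum_comp s.equivFin.symm (fun x : s => ‖Φ ((x : w) : H)‖ ^ 2)
    rw [h1]
    rw [Finset.sum_coe_sort s (fun j => ‖Φ ((j : w) : H)‖ ^ 2)]
    apply Finset.sum_congr rfl
    intro j _
    have hbj : b j = (j : H) := congrFun hb j
    simp [hf, hbj]
  have := core α hα n es hes_on φ μ hchar
  rw [← hΦ] at this
  rw [hsum_eq] at this
  exact this


end Stmt4Aux


/-- Let `λ` be the cylindrical Lévy measure of the canonical `α`-stable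
cylindrical Lévy process on `G`, `α ∈ (0,2)`.  There exists `c_α > 0` such that for every
measurable `ψ : [0,T] → L₂(G,H)`,
`∫₀^T ‖ψ(t)‖_HS^α dt ≤ c_α ∫₀^T ∫_H (‖h‖² ∧ 1) (λ ∘ ψ(t)⁻¹)(dh) dt`.
Here the genuine Lévy measure `μ t` on `H` extending `λ ∘ ψ(t)⁻¹` is characterised as the
symmetric Lévy measure with characteristic exponent `u ↦ ‖ψ(t)* u‖^α`. -/
theorem stmt4
    {G : Type} [NormedAddCommGroup G] [InnerProductSpace ℝ G] [CompleteSpace G]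
    {H : Type} [NormedAddCommGroup H] [InnerProductSpace ℝ H] [CompleteSpace H]
    [MeasurableSpace H] [BorelSpace H] [SecondCountableTopology H]
    (bG : HilbertBasis ℕ ℝ G)
    (T : ℝ) (hT : 0 ≤ T)
    (α : ℝ) (hα : 0 < α) (hα2 : α < 2) :
    ∃ c : ℝ, 0 < c ∧
      ∀ (ψ : ℝ → (G →L[ℝ] H))
        -- `ψ` is measurable and takes Hilbert–Schmidt values:
        (hmeas : ∀ g : G, Measurable fun t => ψ t g)
        (hHS : ∀ t, Summable fun i => ‖ψ t (bG i)‖ ^ 2)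
        (μ : ℝ → Measure H) (hσ : ∀ t, SigmaFinite (μ t))
        -- `μ t` is the genuine Lévy measure on `H` extending `λ ∘ ψ(t)⁻¹`:
        (hsym : ∀ t, (μ t).map (fun h => -h) = μ t) (h0 : ∀ t, μ t {0} = 0)
        (hchar : ∀ t (u : H),
          ∫⁻ h, ENNReal.ofReal (1 - Real.cos ⟪u, h⟫) ∂(μ t)
            = ENNReal.ofReal (‖(ContinuousLinearMap.adjoint (ψ t)) u‖ ^ α)),
        ∫⁻ t in Set.Ioc 0 T, ENNReal.ofReal ((∑' i, ‖ψ t (bG i)‖ ^ 2) ^ (α / 2))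
          ≤ ENNReal.ofReal c *
            ∫⁻ t in Set.Ioc 0 T, ∫⁻ h, min ((‖h‖₊ : ENNReal) ^ 2) 1 ∂(μ t) := by
  refine ⟨24 * 2 ^ (α/2), by positivity, ?_⟩
  intro ψ hmeas hHS μ hσ hsym h0 hchar
  calc ∫⁻ t in Set.Ioc 0 T, ENNReal.ofReal ((∑' i, ‖ψ t (bG i)‖ ^ 2) ^ (α / 2))
      ≤ ∫⁻ t in Set.Ioc 0 T, ENNReal.ofReal (24 * 2 ^ (α/2)) *
          ∫⁻ h, min ((‖h‖₊ : ENNReal) ^ 2) 1 ∂(μ t) := by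
        apply lintegral_mono
        intro t
        exact Stmt4Aux.pointwise bG α hα (ψ t) (hHS t) (μ t) (hchar t)
    _ = ENNReal.ofReal (24 * 2 ^ (α/2)) *
          ∫⁻ t in Set.Ioc 0 T, ∫⁻ h, min ((‖h‖₊ : ENNReal) ^ 2) 1 ∂(μ t) :=
        lintegral_const_mul' _ _ ENNReal.ofReal_ne_top
end
end
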